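/- arXiv:2405.04337 — 4 statements merged into one kernel-verified Lean document; each statement's English description precedes it below -/
import Mathlib

section
/- In the Laurent polynomial ring ℤ[A,A⁻¹][a₁,a₂,a₃], define for m,q ≥ 0 and n ∈ ℤ the element C(m,n)·S_q(a₂) = (−A^{m+n+2}+A^{−m−n−2})S_m(a₁)S_n(a₃)S_q(a₂) + (−A^{m+n}+A^{−m−n})S_{m−1}(a₁)S_{n−1}(a₃)S_{q+1}(a₂) + (−A^{m+n}+A^{−m−n})S_{m−1}(a₁)S_{n−1}(a₃)S_{q−1}(a₂) + (−A^{m+n−2}+A^{−m−n+2})S_{m−2}(a₁)S_{n−2}(a₃)S_q(a₂). Then every coefficient of C(m,n)·S_q(a₂) in the monomial basis {a₁^i a₂^j a₃^k} is a Laurent polynomial f(A) ∈ ℤ[A^{±1}] satisfying f(1) = 0 and f(−1) = 0. -/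
/-- The ring `ℤ[A^{±1}][a₁, a₂, a₃]`. -/
noncomputable abbrev SkeinRing : Type := MvPolynomial (Fin 3) (LaurentPolynomial ℤ)

/-- The Laurent monomial `A^k` viewed in `ℤ[A^{±1}][a₁,a₂,a₃]`. -/
noncomputable def Apow (k : ℤ) : SkeinRing := MvPolynomial.C (LaurentPolynomial.T k)

noncomputable def va₁ : SkeinRing := MvPolynomial.X 0
noncomputable def va₂ : SkeinRing := MvPolynomial.X 1
noncomputable def va₃ : SkeinRing := MvPolynomial.X 2

/-- Evaluation of a Laurent polynomial over `ℤ` at a unit of `ℤ` (i.e. at `A = ±1`). -/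
noncomputable def evalAt (u : ℤˣ) : LaurentPolynomial ℤ →+* ℤ :=
  AddMonoidAlgebra.liftNCRingHom (RingHom.id ℤ)
    ((Units.coeHom ℤ).comp (zpowersHom ℤˣ u)) (fun _ _ => Commute.all _ _)

/-- The element `C(m,n) ⬝ S_q(a₂)` of `ℤ[A^{±1}][a₁,a₂,a₃]`, for `m, q ≥ 0` and `n ∈ ℤ`. -/
noncomputable def CS (S : ℤ → SkeinRing → SkeinRing) (m q : ℕ) (n : ℤ) : SkeinRing :=
  (-Apow ((m : ℤ) + n + 2) + Apow (-((m : ℤ) + n) - 2)) * S m va₁ * S n va₃ * S q va₂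
    + (-Apow ((m : ℤ) + n) + Apow (-((m : ℤ) + n))) * S ((m : ℤ) - 1) va₁ * S (n - 1) va₃ *
        S ((q : ℤ) + 1) va₂
    + (-Apow ((m : ℤ) + n) + Apow (-((m : ℤ) + n))) * S ((m : ℤ) - 1) va₁ * S (n - 1) va₃ *
        S ((q : ℤ) - 1) va₂
    + (-Apow ((m : ℤ) + n - 2) + Apow (-((m : ℤ) + n) + 2)) * S ((m : ℤ) - 2) va₁ *
        S (n - 2) va₃ * S q va₂

/-- Every coefficient of `C(m,n) ⬝ S_q(a₂)` in the monomial basis `a₁^i a₂^j a₃^k` is a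
Laurent polynomial `f(A)` with `f(1) = 0` and `f(-1) = 0`. -/
theorem stmt6
    (S : ℤ → SkeinRing → SkeinRing)
    (hS0 : ∀ x, S 0 x = 1) (hS1 : ∀ x, S 1 x = x)
    (hSrec : ∀ (n : ℤ) (x), S (n + 1) x = x * S n x - S (n - 1) x) :
    ∀ (m q : ℕ) (n : ℤ) (d : Fin 3 →₀ ℕ),
      evalAt 1 (MvPolynomial.coeff d (CS S m q n)) = 0 ∧
      evalAt (-1) (MvPolynomial.coeff d (CS S m q n)) = 0 := by
  have evalAt_T : ∀ (u : ℤˣ) (k : ℤ), evalAt u (LaurentPolynomial.T k) = ((u ^ k : ℤˣ) : ℤ) := by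
    intro u k
    show AddMonoidAlgebra.liftNC _ _ (AddMonoidAlgebra.single k (1 : ℤ)) = _
    rw [AddMonoidAlgebra.liftNC_single]
    simp
  have bracket : ∀ (u : ℤˣ) (x y : ℤ), y = -x →
      MvPolynomial.map (evalAt u) (-Apow x + Apow y) = 0 := by
    intro u x y h
    subst h
    have hu : ∀ v : ℤˣ, v⁻¹ = v := by
      intro v; rcases Int.units_eq_one_or v with h | h <;> simp [h]
    have : evalAt u (-LaurentPolynomial.T x + LaurentPolynomial.T (-x)) = 0 := by
      rw [map_add, map_neg, evalAt_T, evalAt_T, zpow_neg, hu]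
      ring
    simp only [Apow, ← map_add, ← map_neg, ← MvPolynomial.C_neg, ← MvPolynomial.C_add,
      MvPolynomial.map_C, this, map_zero]
  have key : ∀ (u : ℤˣ) (m q : ℕ) (n : ℤ) (d : Fin 3 →₀ ℕ),
      evalAt u (MvPolynomial.coeff d (CS S m q n)) = 0 := by
    intro u m q n d
    rw [← MvPolynomial.coeff_map]
    have h1 := bracket u ((m : ℤ) + n + 2) (-((m : ℤ) + n) - 2) (by ring)
    have h2 := bracket u ((m : ℤ) + n) (-((m : ℤ) + n)) (by ring)
    have h3 := bracket u ((m : ℤ) + n - 2) (-((m : ℤ) + n) + 2) (by ring)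
    have : MvPolynomial.map (evalAt u) (CS S m q n) = 0 := by
      simp only [CS, map_add, map_mul, h1, h2, h3]
      ring
    rw [this, MvPolynomial.coeff_zero]
  intro m q n d
  exact ⟨key 1 m q n d, key (-1) m q n d⟩
end

section
/- There is no sequence of Laurent polynomials α_n ∈ ℤ[A,A⁻¹] (n ≥ 0) with α_0 ≠ 0 such that for all n ≥ 1: (−A^{2n+2}+A^{−2n−2})·α_n + (−A^{2n}+A^{−2n})·α_{n−1} = 0 and α_n ≠ 0. -/
open AddMonoidAlgebra LaurentPolynomial

noncomputable section Stmt7Aux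

private abbrev DD : ℤ → WithBot ℤ := (↑·)

private def sg (a u : ℤ) : LaurentPolynomial ℤ := AddMonoidAlgebra.single a u

/-- breadth-ish: supDegree of f plus supDegree of invert f. -/
private def brd (f : LaurentPolynomial ℤ) : WithBot ℤ :=
  AddMonoidAlgebra.supDegree DD f + AddMonoidAlgebra.supDegree DD (invert f)

private lemma supDegree_ne_bot {f : LaurentPolynomial ℤ} (hf : f ≠ 0) :
    AddMonoidAlgebra.supDegree DD f ≠ ⊥ := by
  obtain ⟨a, _, ha⟩ := AddMonoidAlgebra.exists_supDegree_mem_support DD hf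
  rw [ha]; exact WithBot.coe_ne_bot

private lemma invert_ne_zero {f : LaurentPolynomial ℤ} (hf : f ≠ 0) :
    (invert f : LaurentPolynomial ℤ) ≠ 0 := by
  simpa using hf

private lemma brd_ne_bot {f : LaurentPolynomial ℤ} (hf : f ≠ 0) : brd f ≠ ⊥ :=
  WithBot.add_ne_bot.mpr ⟨supDegree_ne_bot hf, supDegree_ne_bot (invert_ne_zero hf)⟩

private lemma brd_nonneg {f : LaurentPolynomial ℤ} (hf : f ≠ 0) : 0 ≤ brd f := by
  obtain ⟨a, ha, _⟩ := AddMonoidAlgebra.exists_supDegree_mem_support DD hf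
  have h1 : DD a ≤ AddMonoidAlgebra.supDegree DD f := Finset.le_sup ha
  have hmem : (-a) ∈ (invert f : LaurentPolynomial ℤ).coeff.support := by
    rw [Finsupp.mem_support_iff]
    simpa using Finsupp.mem_support_iff.mp ha
  have h2 : DD (-a) ≤ AddMonoidAlgebra.supDegree DD (invert f) := Finset.le_sup hmem
  have h3 := add_le_add h1 h2
  have h4 : DD a + DD (-a) = 0 := by
    show ((a : WithBot ℤ)) + ((-a : ℤ) : WithBot ℤ) = 0
    rw [← WithBot.coe_add]
    norm_num
  rw [h4] at h3
  exact h3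

private lemma brd_neg (f : LaurentPolynomial ℤ) : brd (-f) = brd f := by
  unfold brd
  rw [map_neg, AddMonoidAlgebra.supDegree_neg, AddMonoidAlgebra.supDegree_neg]

private lemma pair_mul (a b u v : ℤ) (h : b < a) (hu : u ≠ 0) (f : LaurentPolynomial ℤ)
    (hf : f ≠ 0) :
    AddMonoidAlgebra.supDegree DD ((sg a u + sg b v) * f)
      = (a : WithBot ℤ) + AddMonoidAlgebra.supDegree DD f := by
  obtain ⟨mm, hmm, hsd⟩ := AddMonoidAlgebra.exists_supDegree_mem_support DD hf
  have hmax : ∀ c ∈ f.coeff.support, c ≤ mm := by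
    intro c hc
    have h1 : DD c ≤ AddMonoidAlgebra.supDegree DD f := Finset.le_sup hc
    rw [hsd] at h1
    exact_mod_cast h1
  have hfz : ∀ c : ℤ, mm < c → f.coeff c = 0 := by
    intro c hc
    by_contra hne
    exact absurd (hmax c (Finsupp.mem_support_iff.mpr hne)) (not_le.mpr hc)
  have happly : ∀ x : ℤ, ((sg a u + sg b v) * f).coeff x
      = u * f.coeff (-a + x) + v * f.coeff (-b + x) := by
    intro x
    rw [add_mul, AddMonoidAlgebra.coeff_add, Finsupp.add_apply]
    rw [show sg a u = AddMonoidAlgebra.single a u from rfl,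
      show sg b v = AddMonoidAlgebra.single b v from rfl,
      AddMonoidAlgebra.coeff_single_mul_apply, AddMonoidAlgebra.coeff_single_mul_apply]
  have hval : ((sg a u + sg b v) * f).coeff (a + mm) = u * f.coeff mm := by
    rw [happly, hfz (-b + (a + mm)) (by omega), mul_zero, add_zero, neg_add_cancel_left]
  have hmem : (a + mm) ∈ ((sg a u + sg b v) * f).coeff.support := by
    rw [Finsupp.mem_support_iff, hval]
    exact mul_ne_zero hu (Finsupp.mem_support_iff.mp hmm)
  have hmaxon : IsMaxOn DD (((sg a u + sg b v) * f).coeff.support : Set ℤ)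
      (a + mm) := by
    intro x hx
    have hx' : ((sg a u + sg b v) * f).coeff x ≠ 0 :=
      Finsupp.mem_support_iff.mp hx
    rw [happly] at hx'
    have hle : x ≤ a + mm := by
      by_contra hgt
      push_neg at hgt
      rw [hfz (-a + x) (by omega), hfz (-b + x) (by omega), mul_zero, mul_zero, add_zero] at hx'
      exact hx' rfl
    exact_mod_cast (WithBot.coe_le_coe.mpr hle : DD x ≤ DD (a + mm))
  rw [AddMonoidAlgebra.supDegree_eq_of_isMaxOn hmem hmaxon, hsd]
  show ((a + mm : ℤ) : WithBot ℤ) = (a : WithBot ℤ) + (mm : WithBot ℤ)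
  exact_mod_cast WithBot.coe_add a mm

private lemma invert_single (a u : ℤ) :
    (invert (sg a u) : LaurentPolynomial ℤ) = sg (-a) u := by
  ext n
  rw [LaurentPolynomial.invert_apply]
  show (Finsupp.single a u : ℤ →₀ ℤ) (-n) = (Finsupp.single (-a) u : ℤ →₀ ℤ) n
  rw [Finsupp.single_apply, Finsupp.single_apply]
  exact if_congr ⟨fun h => by omega, fun h => by omega⟩ rfl rfl

private lemma brd_pair_mul (a b u v : ℤ) (h : b < a) (hu : u ≠ 0) (hv : v ≠ 0)
    (f : LaurentPolynomial ℤ) (hf : f ≠ 0) :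
    brd ((sg a u + sg b v) * f) = ((a - b : ℤ) : WithBot ℤ) + brd f := by
  have h1 := pair_mul a b u v h hu f hf
  have h2 : (invert ((sg a u + sg b v) * f) : LaurentPolynomial ℤ)
      = (sg (-b) v + sg (-a) u) * invert f := by
    rw [map_mul, map_add, invert_single, invert_single, add_comm]
  have h3 := pair_mul (-b) (-a) v u (by omega) hv (invert f) (invert_ne_zero hf)
  unfold brd
  rw [h1, h2, h3, add_add_add_comm, ← WithBot.coe_add, sub_eq_add_neg]

private lemma neg_T_add_T (a b : ℤ) :
    (-T a + T b : LaurentPolynomial ℤ) = sg a (-1) + sg b 1 := by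
  show -T a + T b = (AddMonoidAlgebra.single a (-1) : LaurentPolynomial ℤ) + AddMonoidAlgebra.single b 1
  rw [show (T a : LaurentPolynomial ℤ) = AddMonoidAlgebra.single a 1 from rfl,
    show (T b : LaurentPolynomial ℤ) = AddMonoidAlgebra.single b 1 from rfl, ← AddMonoidAlgebra.single_neg]

end Stmt7Aux

/-- There is no sequence `α : ℕ → ℤ[A^{±1}]` with `α 0 ≠ 0` such that for every `n ≥ 1`
both `(-A^{2n+2} + A^{-2n-2}) α n + (-A^{2n} + A^{-2n}) α (n-1) = 0` and `α n ≠ 0`. -/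
theorem stmt7 :
    ¬ ∃ α : ℕ → LaurentPolynomial ℤ, α 0 ≠ 0 ∧
      ∀ n : ℕ, 1 ≤ n →
        (-LaurentPolynomial.T (2 * (n : ℤ) + 2) + LaurentPolynomial.T (-(2 * (n : ℤ)) - 2)) * α n
            + (-LaurentPolynomial.T (2 * (n : ℤ)) + LaurentPolynomial.T (-(2 * (n : ℤ)))) *
              α (n - 1) = 0
          ∧ α n ≠ 0 := by
  rintro ⟨α, h0, hrec⟩
  -- every α n is nonzero
  have hne : ∀ n : ℕ, α n ≠ 0 := by
    intro n
    cases n with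
    | zero => exact h0
    | succ m => exact (hrec (m + 1) (Nat.le_add_left 1 m)).2
  -- the integer-valued breadth
  set c : ℕ → ℤ := fun n => (brd (α n)).unbotD 0 with hc
  have hcoe : ∀ n : ℕ, brd (α n) = ((c n : ℤ) : WithBot ℤ) := by
    intro n
    have := brd_ne_bot (hne n)
    rcases WithBot.ne_bot_iff_exists.mp this with ⟨d, hd⟩
    rw [hc]
    simp [← hd]
  have hnn : ∀ n : ℕ, 0 ≤ c n := by
    intro n
    have := brd_nonneg (hne n)
    rw [hcoe n] at this
    exact_mod_cast this
  -- the recurrence on breadths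
  have hstep : ∀ n : ℕ, c (n + 1) + 4 = c n := by
    intro n
    obtain ⟨heq, -⟩ := hrec (n + 1) (Nat.le_add_left 1 n)
    have hXY : (-T (2 * ((n + 1 : ℕ) : ℤ) + 2) + T (-(2 * ((n + 1 : ℕ) : ℤ)) - 2))
          * α (n + 1)
        = -((-T (2 * ((n + 1 : ℕ) : ℤ)) + T (-(2 * ((n + 1 : ℕ) : ℤ)))) * α ((n + 1) - 1)) := by
      linear_combination heq
    have hb : brd ((-T (2 * ((n + 1 : ℕ) : ℤ) + 2) + T (-(2 * ((n + 1 : ℕ) : ℤ)) - 2))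
          * α (n + 1))
        = brd ((-T (2 * ((n + 1 : ℕ) : ℤ)) + T (-(2 * ((n + 1 : ℕ) : ℤ)))) * α ((n + 1) - 1)) := by
      rw [hXY, brd_neg]
    rw [neg_T_add_T, neg_T_add_T] at hb
    rw [brd_pair_mul _ _ _ _ (by push_cast; omega) (by norm_num) one_ne_zero _ (hne (n + 1)),
      brd_pair_mul _ _ _ _ (by push_cast; omega) (by norm_num) one_ne_zero _ (hne ((n + 1) - 1))]
      at hb
    rw [hcoe (n + 1), hcoe ((n + 1) - 1)] at hb
    rw [← WithBot.coe_add, ← WithBot.coe_add] at hb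
    have hb' : (2 * ((n + 1 : ℕ) : ℤ) + 2 - (-(2 * ((n + 1 : ℕ) : ℤ)) - 2)) + c (n + 1)
        = (2 * ((n + 1 : ℕ) : ℤ) - -(2 * ((n + 1 : ℕ) : ℤ))) + c ((n + 1) - 1) :=
      WithBot.coe_injective hb
    have hn1 : ((n + 1) - 1 : ℕ) = n := rfl
    rw [hn1] at hb'
    push_cast at hb'
    omega
  -- hence c 0 ≥ 4 n for every n
  have hge : ∀ n : ℕ, c n + 4 * n = c 0 := by
    intro n
    induction n with
    | zero => simp
    | succ m ih =>
      have := hstep m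
      push_cast
      push_cast at ih
      omega
  have h1 := hge (c 0).natAbs.succ
  have h2 := hnn (c 0).natAbs.succ
  have h3 : ((c 0).natAbs : ℤ) = |c 0| := Int.abs_eq_natAbs (c 0) ▸ rfl
  push_cast at h1
  omega
end

section
/- Let f, g ∈ ℤ[A,A⁻¹] be nonzero Laurent polynomials and suppose (−A^{2n+2}+A^{−2n−2})·f + (−A^{2n}+A^{−2n})·g = 0 for some n ≥ 1. Then the breadth of f is strictly less than the breadth of g, where the breadth of a nonzero Laurent polynomial is the difference between its highest and lowest degrees in A. -/
open LaurentPolynomial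

lemma coeff_mul_top' (p q : LaurentPolynomial ℤ) (a b : ℤ)
    (ha : ∀ x ∈ p.coeff.support, x ≤ a) (hb : ∀ y ∈ q.coeff.support, y ≤ b) :
    (p * q).coeff (a + b) = p.coeff a * q.coeff b := by
  classical
  rw [AddMonoidAlgebra.coeff_mul]
  simp_rw [Finsupp.sum]
  rw [Finset.sum_eq_single a, Finset.sum_eq_single b, if_pos rfl]
  · intro y hy hne
    exact if_neg (fun he => hne (by omega))
  · intro hbq
    rw [if_pos rfl, Finsupp.notMem_support_iff.1 hbq, mul_zero]
  · intro x hx hne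
    refine Finset.sum_eq_zero fun y hy => if_neg fun he => ?_
    have h1 := hb y hy
    have hxa : x < a := lt_of_le_of_ne (ha x hx) hne
    omega
  · intro hap
    refine Finset.sum_eq_zero fun y _ => ?_
    rw [Finsupp.notMem_support_iff.1 hap, zero_mul, ite_self]

lemma coeff_mul_bot' (p q : LaurentPolynomial ℤ) (a b : ℤ)
    (ha : ∀ x ∈ p.coeff.support, a ≤ x) (hb : ∀ y ∈ q.coeff.support, b ≤ y) :
    (p * q).coeff (a + b) = p.coeff a * q.coeff b := by
  classical
  rw [AddMonoidAlgebra.coeff_mul]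
  simp_rw [Finsupp.sum]
  rw [Finset.sum_eq_single a, Finset.sum_eq_single b, if_pos rfl]
  · intro y hy hne
    exact if_neg (fun he => hne (by omega))
  · intro hbq
    rw [if_pos rfl, Finsupp.notMem_support_iff.1 hbq, mul_zero]
  · intro x hx hne
    refine Finset.sum_eq_zero fun y hy => if_neg fun he => ?_
    have h1 := hb y hy
    have hxa : a < x := lt_of_le_of_ne (ha x hx) (Ne.symm hne)
    omega
  · intro hap
    refine Finset.sum_eq_zero fun y _ => ?_
    rw [Finsupp.notMem_support_iff.1 hap, zero_mul, ite_self]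

lemma support_mul_max' (p q : LaurentPolynomial ℤ) (a b : ℤ)
    (hpa : p.coeff a ≠ 0) (ha : ∀ x ∈ p.coeff.support, x ≤ a)
    (hqb : q.coeff b ≠ 0) (hb : ∀ y ∈ q.coeff.support, y ≤ b) :
    (p * q).coeff.support.max = ((a + b : ℤ) : WithBot ℤ) := by
  apply le_antisymm
  · refine Finset.max_le fun c hc => ?_
    obtain ⟨x, hx, y, hy, rfl⟩ := Finset.mem_add.1 (AddMonoidAlgebra.support_coeff_mul_subset p q hc)
    exact_mod_cast add_le_add (ha x hx) (hb y hy)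
  · apply Finset.le_max
    rw [Finsupp.mem_support_iff, coeff_mul_top' p q a b ha hb]
    exact mul_ne_zero hpa hqb

lemma support_mul_min' (p q : LaurentPolynomial ℤ) (a b : ℤ)
    (hpa : p.coeff a ≠ 0) (ha : ∀ x ∈ p.coeff.support, a ≤ x)
    (hqb : q.coeff b ≠ 0) (hb : ∀ y ∈ q.coeff.support, b ≤ y) :
    (p * q).coeff.support.min = ((a + b : ℤ) : WithTop ℤ) := by
  apply le_antisymm
  · apply Finset.min_le
    rw [Finsupp.mem_support_iff, coeff_mul_bot' p q a b ha hb]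
    exact mul_ne_zero hpa hqb
  · refine Finset.le_min fun c hc => ?_
    obtain ⟨x, hx, y, hy, rfl⟩ := Finset.mem_add.1 (AddMonoidAlgebra.support_coeff_mul_subset p q hc)
    exact_mod_cast add_le_add (ha x hx) (hb y hy)

lemma binom_apply (a x : ℤ) :
    (-T a + T (-a) : LaurentPolynomial ℤ).coeff x
      = -(if a = x then 1 else 0) + (if -a = x then 1 else 0) := by
  rw [AddMonoidAlgebra.coeff_add, AddMonoidAlgebra.coeff_neg, Finsupp.add_apply, Finsupp.neg_apply, T, T,
    AddMonoidAlgebra.coeff_single, AddMonoidAlgebra.coeff_single, Finsupp.single_apply, Finsupp.single_apply]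

lemma binom_facts (a : ℤ) (ha : 0 < a) :
    ((-T a + T (-a) : LaurentPolynomial ℤ).coeff a = -1) ∧
    ((-T a + T (-a) : LaurentPolynomial ℤ).coeff (-a) = 1) ∧
    (∀ x ∈ (-T a + T (-a) : LaurentPolynomial ℤ).coeff.support, -a ≤ x ∧ x ≤ a) := by
  refine ⟨?_, ?_, fun x hx => ?_⟩
  · rw [binom_apply, if_pos rfl, if_neg (by omega)]; ring
  · rw [binom_apply, if_pos rfl, if_neg (by omega)]; ring
  · rw [Finsupp.mem_support_iff, binom_apply] at hx
    by_contra hc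
    exact hx (by rw [if_neg (by omega), if_neg (by omega)]; ring)


/-- The breadth of a Laurent polynomial: the difference between the highest and lowest
exponents of `A` occurring with nonzero coefficient (with junk value `0` for `0`). -/
noncomputable def breadth (f : LaurentPolynomial ℤ) : ℤ :=
  WithBot.unbotD 0 f.coeff.support.max - WithTop.untopD 0 f.coeff.support.min

/-- If `(-A^{2n+2} + A^{-2n-2}) f + (-A^{2n} + A^{-2n}) g = 0` with `f, g ≠ 0` and `n ≥ 1`,
then `breadth f < breadth g`. -/
theorem stmt8 (f g : LaurentPolynomial ℤ) (hf : f ≠ 0) (hg : g ≠ 0) (n : ℕ) (hn : 1 ≤ n)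
    (h : (-LaurentPolynomial.T (2 * (n : ℤ) + 2) + LaurentPolynomial.T (-(2 * (n : ℤ)) - 2)) * f
        + (-LaurentPolynomial.T (2 * (n : ℤ)) + LaurentPolynomial.T (-(2 * (n : ℤ)))) * g = 0) :
    breadth f < breadth g := by
  set a : ℤ := 2 * (n : ℤ) + 2 with ha_def
  set b : ℤ := 2 * (n : ℤ) with hb_def
  have ha : 0 < a := by positivity
  have hb : 0 < b := by
    have : (1 : ℤ) ≤ (n : ℤ) := by exact_mod_cast hn
    omega
  have hrw : -(2 * (n : ℤ)) - 2 = -a := by ring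
  rw [hrw] at h
  have hrw2 : -(2 * (n : ℤ)) = -b := by ring
  rw [hrw2] at h
  set p₁ : LaurentPolynomial ℤ := -T a + T (-a) with hp1
  set p₂ : LaurentPolynomial ℤ := -T b + T (-b) with hp2
  have heq : p₁ * f = p₂ * (-g) := by
    have : p₂ * (-g) = -(p₂ * g) := by ring
    rw [this, eq_neg_iff_add_eq_zero]
    exact h
  obtain ⟨h1a, h1b, h1s⟩ := binom_facts a ha
  obtain ⟨h2a, h2b, h2s⟩ := binom_facts b hb
  -- facts about f
  have hfs : f.coeff.support.Nonempty := Finsupp.support_nonempty_iff.2 (by simpa using hf)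
  have hgs : g.coeff.support.Nonempty := Finsupp.support_nonempty_iff.2 (by simpa using hg)
  set Mf := f.coeff.support.max' hfs
  set mf := f.coeff.support.min' hfs
  set Mg := g.coeff.support.max' hgs
  set mg := g.coeff.support.min' hgs
  have hfM : f.coeff Mf ≠ 0 := Finsupp.mem_support_iff.1 (f.coeff.support.max'_mem hfs)
  have hfm : f.coeff mf ≠ 0 := Finsupp.mem_support_iff.1 (f.coeff.support.min'_mem hfs)
  have hgsupp : (-g).coeff.support = g.coeff.support := Finsupp.support_neg g.coeff
  have hgM : (-g).coeff Mg ≠ 0 := by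
    rw [AddMonoidAlgebra.coeff_neg, Finsupp.neg_apply, neg_ne_zero]
    exact Finsupp.mem_support_iff.1 (g.coeff.support.max'_mem hgs)
  have hgm : (-g).coeff mg ≠ 0 := by
    rw [AddMonoidAlgebra.coeff_neg, Finsupp.neg_apply, neg_ne_zero]
    exact Finsupp.mem_support_iff.1 (g.coeff.support.min'_mem hgs)
  have hmax : ((a + Mf : ℤ) : WithBot ℤ) = ((b + Mg : ℤ) : WithBot ℤ) := by
    rw [← support_mul_max' p₁ f a Mf (h1a ▸ by norm_num) (fun x hx => (h1s x hx).2)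
          hfM (fun x hx => Finset.le_max' _ x hx),
        heq,
        support_mul_max' p₂ (-g) b Mg (h2a ▸ by norm_num) (fun x hx => (h2s x hx).2)
          hgM (fun x hx => hgsupp ▸ hx |> Finset.le_max' _ x)]
  have hmin : ((-a + mf : ℤ) : WithTop ℤ) = ((-b + mg : ℤ) : WithTop ℤ) := by
    rw [← support_mul_min' p₁ f (-a) mf (h1b ▸ one_ne_zero) (fun x hx => (h1s x hx).1)
          hfm (fun x hx => Finset.min'_le _ x hx),
        heq,
        support_mul_min' p₂ (-g) (-b) mg (h2b ▸ one_ne_zero) (fun x hx => (h2s x hx).1)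
          hgm (fun x hx => Finset.min'_le _ x (hgsupp ▸ hx))]
  have hM : a + Mf = b + Mg := by exact_mod_cast hmax
  have hm : -a + mf = -b + mg := by exact_mod_cast hmin
  have hbf : breadth f = Mf - mf := by
    rw [breadth, ← Finset.coe_max' hfs, ← Finset.coe_min' hfs]
    rfl
  have hbg : breadth g = Mg - mg := by
    rw [breadth, ← Finset.coe_max' hgs, ← Finset.coe_min' hgs]
    rfl
  rw [hbf, hbg]
  omega
end

section
/- Let ι : M → ℤ[A,A⁻¹] be a ℤ[A,A⁻¹]-module homomorphism from a module M, and suppose there are elements x_n ∈ M (n ≥ 0) such that for each n ≥ 1 the relation (−A^{2n+2}+A^{−2n−2})·x_n + (−A^{2n}+A^{−2n})·x_{n−1} = 0 holds in M, and ι(x_n) ≠ 0 for all n ≥ 0. Then we obtain a contradiction; i.e., no such homomorphism and family exist simultaneously. -/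
open LaurentPolynomial Polynomial

private theorem laurent_key_aux (n : ℕ) (pn pm : LaurentPolynomial ℤ) (kn km : ℕ)
    (Pn Pm : Polynomial ℤ)
    (hPn : toLaurent Pn = pn * T (kn : ℤ)) (hPm : toLaurent Pm = pm * T (km : ℤ))
    (hrel' : (-T (2 * (n:ℤ) + 2) + T (-(2 * (n:ℤ)) - 2)) * pn
        = (T (2 * (n:ℤ)) - T (-(2 * (n:ℤ)))) * pm) :
    (1 - X ^ (4*n+4)) * (Pn * X ^ (2*n + km)) = (X ^ (4*n) - 1) * (Pm * X ^ (2*n + 2 + kn)) := by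
  apply toLaurent_injective
  simp only [map_mul, map_sub, map_one, toLaurent_X_pow, hPn, hPm]
  push_cast
  have hA : (1 - T ((4*(n:ℤ)+4)) : LaurentPolynomial ℤ)
      = T (2*(n:ℤ)+2) * (-T (2 * (n:ℤ) + 2) + T (-(2 * (n:ℤ)) - 2)) := by
    rw [mul_add, mul_neg, ← T_add, ← T_add, ← T_zero]
    ring_nf
  have hB : (T (4*(n:ℤ)) - 1 : LaurentPolynomial ℤ)
      = T (2*(n:ℤ)) * (T (2 * (n:ℤ)) - T (-(2 * (n:ℤ)))) := by
    rw [mul_sub, ← T_add, ← T_add, ← T_zero]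
    ring_nf
  have hT : (T (2*(n:ℤ)+2) * (T (kn:ℤ) * T (2*(n:ℤ)+(km:ℤ))) : LaurentPolynomial ℤ)
      = T (2*(n:ℤ)) * (T (km:ℤ) * T (2*(n:ℤ)+2+(kn:ℤ))) := by
    rw [← T_add, ← T_add, ← T_add, ← T_add]
    congr 1
    ring
  rw [hA, hB]
  calc T (2*(n:ℤ)+2) * (-T (2 * (n:ℤ) + 2) + T (-(2 * (n:ℤ)) - 2))
          * (pn * T (kn:ℤ) * T (2*(n:ℤ)+(km:ℤ)))
      = ((-T (2 * (n:ℤ) + 2) + T (-(2 * (n:ℤ)) - 2)) * pn)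
          * (T (2*(n:ℤ)+2) * (T (kn:ℤ) * T (2*(n:ℤ)+(km:ℤ)))) := by ring
    _ = ((T (2 * (n:ℤ)) - T (-(2 * (n:ℤ)))) * pm)
          * (T (2*(n:ℤ)) * (T (km:ℤ) * T (2*(n:ℤ)+2+(kn:ℤ)))) := by rw [hrel', hT]
    _ = T (2*(n:ℤ)) * (T (2 * (n:ℤ)) - T (-(2 * (n:ℤ))))
          * (pm * T (km:ℤ) * T (2*(n:ℤ)+2+(kn:ℤ))) := by ring

private theorem one_sub_X_pow_natDegree {m : ℕ} :
    ((1 : Polynomial ℤ) - X ^ m).natDegree = m := by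
  rw [show ((1 : Polynomial ℤ) - X ^ m) = -(X ^ m - Polynomial.C 1) by simp, natDegree_neg,
    natDegree_X_pow_sub_C]

private theorem one_sub_X_pow_ne_zero {m : ℕ} (hm : 0 < m) :
    ((1 : Polynomial ℤ) - X ^ m) ≠ 0 := by
  intro h
  have := one_sub_X_pow_natDegree (m := m)
  rw [h, natDegree_zero] at this
  omega

private theorem one_sub_X_pow_natTrailingDegree {m : ℕ} (hm : 0 < m) :
    ((1 : Polynomial ℤ) - X ^ m).natTrailingDegree = 0 := by
  apply natTrailingDegree_eq_zero.2
  right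
  simp only [coeff_sub, coeff_X_pow, if_neg (by omega : ¬ (0 = m))]
  norm_num

/-- If `ι : M → ℤ[A^{±1}]` is a module homomorphism and `x : ℕ → M` satisfies
`(-A^{2n+2} + A^{-2n-2}) • x n + (-A^{2n} + A^{-2n}) • x (n-1) = 0` for all `n ≥ 1`
with `ι (x n) ≠ 0` for all `n`, we obtain a contradiction. -/
theorem stmt12 {M : Type*} [AddCommGroup M] [Module (LaurentPolynomial ℤ) M]
    (ι : M →ₗ[LaurentPolynomial ℤ] LaurentPolynomial ℤ) (x : ℕ → M)
    (hrel : ∀ n : ℕ, 1 ≤ n →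
      ((-LaurentPolynomial.T (2 * (n : ℤ) + 2) + LaurentPolynomial.T (-(2 * (n : ℤ)) - 2) :
          LaurentPolynomial ℤ)) • x n
        + ((-LaurentPolynomial.T (2 * (n : ℤ)) + LaurentPolynomial.T (-(2 * (n : ℤ))) :
            LaurentPolynomial ℤ)) • x (n - 1) = 0)
    (hne : ∀ n : ℕ, ι (x n) ≠ 0) : False := by
  classical
  -- polynomial representatives of ι (x n)
  have hex : ∀ n : ℕ, ∃ (k : ℕ) (P : Polynomial ℤ),
      toLaurent P = ι (x n) * T (k : ℤ) ∧ P ≠ 0 := by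
    intro n
    obtain ⟨k, P, hP⟩ := exists_T_pow (ι (x n))
    refine ⟨k, P, hP, fun h => hne n ?_⟩
    rw [h, map_zero] at hP
    exact (isUnit_T (R := ℤ) (k : ℤ)).mul_left_eq_zero.mp hP.symm
  choose k P hP hP0 using hex
  -- the degree recursion
  have key : ∀ n : ℕ, 1 ≤ n →
      (P n).natDegree + 4 + (2*n + k (n-1)) = (P (n-1)).natDegree + (2*n + 2 + k n)
      ∧ (P n).natTrailingDegree + (2*n + k (n-1))
          = (P (n-1)).natTrailingDegree + (2*n + 2 + k n) := by
    intro n hn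
    have hrel' : (-T (2 * (n:ℤ) + 2) + T (-(2 * (n:ℤ)) - 2)) * ι (x n)
        = (T (2 * (n:ℤ)) - T (-(2 * (n:ℤ)))) * ι (x (n-1)) := by
      have h := congrArg ι (hrel n hn)
      rw [map_add, map_zero, map_smul, map_smul, smul_eq_mul, smul_eq_mul,
        add_eq_zero_iff_eq_neg] at h
      rw [h]; ring
    have hkey := laurent_key_aux n (ι (x n)) (ι (x (n-1))) (k n) (k (n-1))
      (P n) (P (n-1)) (hP n) (hP (n-1)) hrel'
    have hXn : ((1 : Polynomial ℤ) - X ^ (4*n+4)) ≠ 0 := one_sub_X_pow_ne_zero (by omega)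
    have hXm : ((X : Polynomial ℤ) ^ (4*n) - 1) ≠ 0 := by
      intro h
      apply one_sub_X_pow_ne_zero (m := 4*n) (by omega)
      rw [← neg_sub] at h
      simpa using congrArg Neg.neg h
    have hPn' : P n * X ^ (2*n + k (n-1)) ≠ 0 :=
      mul_ne_zero (hP0 n) (pow_ne_zero _ X_ne_zero)
    have hPm' : P (n-1) * X ^ (2*n + 2 + k n) ≠ 0 :=
      mul_ne_zero (hP0 (n-1)) (pow_ne_zero _ X_ne_zero)
    have hd := congrArg natDegree hkey
    have ht := congrArg natTrailingDegree hkey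
    rw [natDegree_mul hXn hPn', natDegree_mul hXm hPm',
      natDegree_mul (hP0 n) (pow_ne_zero _ X_ne_zero),
      natDegree_mul (hP0 (n-1)) (pow_ne_zero _ X_ne_zero),
      natDegree_X_pow, natDegree_X_pow, one_sub_X_pow_natDegree,
      show ((X : Polynomial ℤ) ^ (4*n) - 1) = -(1 - X^(4*n)) by ring,
      natDegree_neg, one_sub_X_pow_natDegree] at hd
    rw [natTrailingDegree_mul hXn hPn', natTrailingDegree_mul hXm hPm',
      natTrailingDegree_mul (hP0 n) (pow_ne_zero _ X_ne_zero),
      natTrailingDegree_mul (hP0 (n-1)) (pow_ne_zero _ X_ne_zero),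
      natTrailingDegree_X_pow, natTrailingDegree_X_pow,
      one_sub_X_pow_natTrailingDegree (by omega),
      show ((X : Polynomial ℤ) ^ (4*n) - 1) = -(1 - X^(4*n)) by ring,
      natTrailingDegree_neg, one_sub_X_pow_natTrailingDegree (by omega)] at ht
    omega
  -- iterate: breadth drops by 4 each step
  have iter : ∀ n : ℕ,
      ((P n).natDegree : ℤ) - (P n).natTrailingDegree
        = ((P 0).natDegree : ℤ) - (P 0).natTrailingDegree - 4 * n := by
    intro n
    induction n with
    | zero => simp
    | succ m ih =>
        obtain ⟨h1, h2⟩ := key (m+1) (by omega)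
        simp only [Nat.add_sub_cancel] at h1 h2
        push_cast [Nat.cast_add] at h1 h2 ih ⊢
        omega
  have hle : ∀ n : ℕ, (P n).natTrailingDegree ≤ (P n).natDegree :=
    fun n => natTrailingDegree_le_natDegree _
  have h0 := hle ((P 0).natDegree + 1)
  have h1 := iter ((P 0).natDegree + 1)
  have h2 := hle 0
  push_cast at h1
  omega
end
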